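/- Assume the Nečas-type inf-sup bound with seminorm N and constant c_N. Let f ∈ V*, g ∈ Q*, let (u_S, p_S) ∈ V × Q solve the Stokes system S, and for each ε > 0 let (u_ε, p_ε) ∈ V × Q solve the ε-Stokes system ES(ε). Then ‖u_ε − u_S‖_V → 0 and N(p_ε − p_S) → 0 as ε → 0 along (0,∞). (Strong convergence of the ε-Stokes solutions to the Stokes solution, Theorems 4.3–4.4, under the assumption that the Stokes pressure lies in Q.) -/

import Mathlib

/-!
Subtracting the Stokes system from the ε-Stokes system and testing the momentum error equation
with `w = u_ε - u_S` and the pressure equation with `r = p_ε - p_S` gives the energy identity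
`‖w‖² + ε‖r‖² = ε (g r - ⟪p_S, r⟫) ≤ ε (‖g‖ + ‖p_S‖) ‖r‖`, whence `‖w‖ ≤ √ε (‖g‖ + ‖p_S‖) / 2`.
The momentum error equation also says `b(·, r) = -⟪w, ·⟫`, so `‖b(·, r)‖ ≤ ‖w‖`, and the
Nečas bound carries the convergence over to the pressure.
-/

open scoped RealInnerProductSpace

open Filter Topology

section

variable {V Q : Type*} [NormedAddCommGroup V] [InnerProductSpace ℝ V]
  [NormedAddCommGroup Q] [InnerProductSpace ℝ Q]

def IsStokesSolution (b : V →L[ℝ] Q →L[ℝ] ℝ) (f : V →L[ℝ] ℝ) (u : V) (p : Q) : Prop :=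
  (∀ φ : V, ⟪u, φ⟫ + b φ p = f φ) ∧ ∀ ψ : Q, b u ψ = 0

def IsEpsStokesSolution (b : V →L[ℝ] Q →L[ℝ] ℝ) (f : V →L[ℝ] ℝ) (g : Q →L[ℝ] ℝ) (ε : ℝ)
    (u : V) (p : Q) : Prop :=
  (∀ φ : V, ⟪u, φ⟫ + b φ p = f φ) ∧ ∀ ψ : Q, ε * ⟪p, ψ⟫ - b u ψ = ε * g ψ

namespace IsEpsStokesSolution

variable {b : V →L[ℝ] Q →L[ℝ] ℝ} {f : V →L[ℝ] ℝ} {g : Q →L[ℝ] ℝ} {ε : ℝ} {u uS : V} {p pS : Q}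

theorem inner_sub_add_apply_sub (h : IsEpsStokesSolution b f g ε u p)
    (hS : IsStokesSolution b f uS pS) (φ : V) : ⟪u - uS, φ⟫ + b φ (p - pS) = 0 := by
  have h₁ := h.1 φ
  have h₂ := hS.1 φ
  rw [inner_sub_left, map_sub]
  linarith

theorem norm_sq_sub_add_mul_norm_sq_sub (h : IsEpsStokesSolution b f g ε u p)
    (hS : IsStokesSolution b f uS pS) :
    ‖u - uS‖ ^ 2 + ε * ‖p - pS‖ ^ 2 = ε * (g (p - pS) - ⟪pS, p - pS⟫) := by
  set r := p - pS
  have hmomentum : ⟪u - uS, u - uS⟫ + b (u - uS) r = 0 := h.inner_sub_add_apply_sub hS _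
  have hpressure := h.2 r
  have hdiv := hS.2 r
  have hp : ⟪p, r⟫ = ‖r‖ ^ 2 + ⟪pS, r⟫ := by
    rw [← real_inner_self_eq_norm_sq, ← inner_add_left, sub_add_cancel]
  rw [real_inner_self_eq_norm_sq, map_sub b, sub_apply, hdiv] at hmomentum
  rw [hp] at hpressure
  linarith

theorem norm_sub_le (h : IsEpsStokesSolution b f g ε u p) (hS : IsStokesSolution b f uS pS)
    (hε : 0 ≤ ε) : ‖u - uS‖ ≤ √ε * ((‖g‖ + ‖pS‖) / 2) := by
  set r := p - pS
  set C := ‖g‖ + ‖pS‖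
  have hC : 0 ≤ C := by positivity
  have hsource : g r - ⟪pS, r⟫ ≤ C * ‖r‖ := by
    have hg := (abs_le.mp ((Real.norm_eq_abs _).symm ▸ g.le_opNorm r)).2
    have hpS := (abs_le.mp (abs_real_inner_le_norm pS r)).1
    linarith
  have hsq : ‖u - uS‖ ^ 2 ≤ ε * (C / 2) ^ 2 := by
    have henergy := h.norm_sq_sub_add_mul_norm_sq_sub hS
    -- `C‖r‖ - ‖r‖² ≤ (C/2)²`
    nlinarith [mul_le_mul_of_nonneg_left hsource hε, mul_nonneg hε (sq_nonneg (‖r‖ - C / 2))]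
  calc ‖u - uS‖ ≤ √(ε * (C / 2) ^ 2) := Real.le_sqrt_of_sq_le hsq
    _ = √ε * (C / 2) := by rw [Real.sqrt_mul hε, Real.sqrt_sq (by positivity)]

theorem norm_flip_sub_le (h : IsEpsStokesSolution b f g ε u p)
    (hS : IsStokesSolution b f uS pS) : ‖b.flip (p - pS)‖ ≤ ‖u - uS‖ :=
  ContinuousLinearMap.opNorm_le_bound _ (norm_nonneg _) fun φ => by
    rw [ContinuousLinearMap.flip_apply, eq_neg_of_add_eq_zero_right
      (h.inner_sub_add_apply_sub hS φ), norm_neg, Real.norm_eq_abs]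
    exact abs_real_inner_le_norm _ _

end IsEpsStokesSolution

end

theorem epsStokes_strong_convergence_to_stokes_general {V Q : Type*}
    [NormedAddCommGroup V] [InnerProductSpace ℝ V]
    [NormedAddCommGroup Q] [InnerProductSpace ℝ Q]
    (b : V →L[ℝ] Q →L[ℝ] ℝ)
    (N : Seminorm ℝ Q) (cN : ℝ)
    (hNecas : ∀ q : Q, N q ≤ cN * ‖b.flip q‖)
    (f : V →L[ℝ] ℝ) (g : Q →L[ℝ] ℝ)
    (uS : V) (pS : Q)
    (hS1 : ∀ φ : V, ⟪uS, φ⟫ + b φ pS = f φ)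
    (hS2 : ∀ ψ : Q, b uS ψ = 0)
    (u : ℝ → V) (p : ℝ → Q)
    (hsol : ∀ ε : ℝ, 0 < ε →
      (∀ φ : V, ⟪u ε, φ⟫ + b φ (p ε) = f φ) ∧
      (∀ ψ : Q, ε * ⟪p ε, ψ⟫ - b (u ε) ψ = ε * g ψ)) :
    Filter.Tendsto (fun ε : ℝ => ‖u ε - uS‖) (nhdsWithin 0 (Set.Ioi 0)) (nhds 0) ∧
    Filter.Tendsto (fun ε : ℝ => N (p ε - pS)) (nhdsWithin 0 (Set.Ioi 0)) (nhds 0) := by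
  have hS : IsStokesSolution b f uS pS := ⟨hS1, hS2⟩
  have hsolε : ∀ᶠ ε in 𝓝[>] 0, IsEpsStokesSolution b f g ε (u ε) (p ε) :=
    eventually_nhdsWithin_of_forall hsol
  have hsqrt : Tendsto (fun ε : ℝ => √ε * ((‖g‖ + ‖pS‖) / 2)) (𝓝[>] 0) (𝓝 0) := by
    simpa using ((Real.continuous_sqrt.tendsto 0).mono_left nhdsWithin_le_nhds).mul_const
      ((‖g‖ + ‖pS‖) / 2)
  have hu : Tendsto (fun ε => ‖u ε - uS‖) (𝓝[>] 0) (𝓝 0) :=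
    squeeze_zero' (.of_forall fun _ => norm_nonneg _)
      (hsolε.mp (eventually_mem_nhdsWithin.mono fun _ hε h => h.norm_sub_le hS (le_of_lt hε)))
      hsqrt
  have hflip : Tendsto (fun ε => ‖b.flip (p ε - pS)‖) (𝓝[>] 0) (𝓝 0) :=
    squeeze_zero' (.of_forall fun _ => norm_nonneg _)
      (hsolε.mono fun _ h => h.norm_flip_sub_le hS) hu
  refine ⟨hu, squeeze_zero' (.of_forall fun _ => apply_nonneg N _)
    (.of_forall fun ε => hNecas _) ?_⟩
  simpa using hflip.const_mul cN

/-- Strong convergence of the ε-Stokes solutions to the Stokes solution as ε → 0⁺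
(Theorems 4.3–4.4): `‖u_ε − u_S‖ → 0` and `N(p_ε − p_S) → 0`. -/
theorem epsStokes_strong_convergence_to_stokes {V Q : Type*}
    [NormedAddCommGroup V] [InnerProductSpace ℝ V] [CompleteSpace V]
    [NormedAddCommGroup Q] [InnerProductSpace ℝ Q] [CompleteSpace Q]
    (b : V →L[ℝ] Q →L[ℝ] ℝ)
    (N : Seminorm ℝ Q) (cN : ℝ) (hcN : 0 < cN)
    (hNecas : ∀ q : Q, N q ≤ cN * ‖b.flip q‖)
    (f : V →L[ℝ] ℝ) (g : Q →L[ℝ] ℝ)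
    (uS : V) (pS : Q)
    (hS1 : ∀ φ : V, ⟪uS, φ⟫ + b φ pS = f φ)
    (hS2 : ∀ ψ : Q, b uS ψ = 0)
    (u : ℝ → V) (p : ℝ → Q)
    (hsol : ∀ ε : ℝ, 0 < ε →
      (∀ φ : V, ⟪u ε, φ⟫ + b φ (p ε) = f φ) ∧
      (∀ ψ : Q, ε * ⟪p ε, ψ⟫ - b (u ε) ψ = ε * g ψ)) :
    Filter.Tendsto (fun ε : ℝ => ‖u ε - uS‖) (nhdsWithin 0 (Set.Ioi 0)) (nhds 0) ∧
    Filter.Tendsto (fun ε : ℝ => N (p ε - pS)) (nhdsWithin 0 (Set.Ioi 0)) (nhds 0) :=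
  epsStokes_strong_convergence_to_stokes_general b N cN hNecas f g uS pS hS1 hS2 u p hsol
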